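/- arXiv:2502.08951 — 2 statements merged into one kernel-verified Lean document; each statement's English description precedes it below -/
import Mathlib

section
/- Let A(t) ∈ ℝ^{m₁×m₂} have rank exactly r for all t ∈ [t⁰, t¹], with factorization A(t) = X(t) S(t) V(t)ᵀ (X, V having orthonormal columns). If V(t¹)ᵀ V(t⁰) is invertible, then the solution K(t) = A(t) V(t⁰) of the K-equation K̇ = Ȧ V(t⁰) with K(t⁰) = X(t⁰)S(t⁰) satisfies: the column span of K(t¹) equals the column span (range) of A(t¹). -/
open Matrix

/-! K(t¹) = X S V(t¹)ᵀ V(t⁰), and both `V(t¹)ᵀ V(t⁰)` (invertible) and `V(t¹)ᵀ` (right inverse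
`V(t¹)`) are onto, so right multiplication by either leaves the column span of `X S` unchanged. -/

theorem Matrix.range_mulVecLin_mul_of_mul_eq_one {l m n R : Type*} [CommSemiring R]
    [Fintype m] [Fintype n] [DecidableEq m] (M : Matrix l m R) {N : Matrix m n R}
    {B : Matrix n m R} (h : N * B = 1) :
    LinearMap.range (M * N).mulVecLin = LinearMap.range M.mulVecLin := by
  have hN : Function.Surjective N.mulVecLin :=
    mulVec_surjective_iff_exists_right_inverse.mpr ⟨B, h⟩
  rw [mulVecLin_mul, LinearMap.range_comp, LinearMap.range_eq_top.mpr hN, Submodule.map_top]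

theorem k_step_range_general {m₁ m₂ r : ℕ}
    (A : ℝ → Matrix (Fin m₁) (Fin m₂) ℝ)
    (X : ℝ → Matrix (Fin m₁) (Fin r) ℝ)
    (S : ℝ → Matrix (Fin r) (Fin r) ℝ)
    (V : ℝ → Matrix (Fin m₂) (Fin r) ℝ)
    (t0 t1 : ℝ) (ht : t0 ≤ t1)
    (hfact : ∀ t ∈ Set.Icc t0 t1, A t = X t * S t * (V t)ᵀ)
    (hVorth : ∀ t ∈ Set.Icc t0 t1, (V t)ᵀ * V t = 1)
    (hinv : IsUnit ((V t1)ᵀ * V t0))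
    (K : ℝ → Matrix (Fin m₁) (Fin r) ℝ)
    (hK : ∀ t ∈ Set.Icc t0 t1, K t = A t * V t0) :
    LinearMap.range (K t1).mulVecLin = LinearMap.range (A t1).mulVecLin := by
  have h1 : t1 ∈ Set.Icc t0 t1 := ⟨ht, le_rfl⟩
  obtain ⟨B, hB⟩ := hinv.exists_right_inv
  rw [hK t1 h1, hfact t1 h1]
  calc LinearMap.range (X t1 * S t1 * (V t1)ᵀ * V t0).mulVecLin
      = LinearMap.range (X t1 * S t1 * ((V t1)ᵀ * V t0)).mulVecLin := by rw [Matrix.mul_assoc]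
    _ = LinearMap.range (X t1 * S t1).mulVecLin := range_mulVecLin_mul_of_mul_eq_one _ hB
    _ = LinearMap.range (X t1 * S t1 * (V t1)ᵀ).mulVecLin :=
        (range_mulVecLin_mul_of_mul_eq_one _ (hVorth t1 h1)).symm

/-- Exactness lemma for the K-step: if `A t` has rank exactly `r` on `[t0, t1]` with
orthonormal factorization `A t = X t * S t * (V t)ᵀ` and `(V t1)ᵀ * V t0` is invertible,
then `K t1 = A t1 * V t0` (the solution of the K-equation with `K t0 = X t0 * S t0`)
has the same column span (range) as `A t1`. -/
theorem k_step_range {m₁ m₂ r : ℕ}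
    (A : ℝ → Matrix (Fin m₁) (Fin m₂) ℝ)
    (X : ℝ → Matrix (Fin m₁) (Fin r) ℝ)
    (S : ℝ → Matrix (Fin r) (Fin r) ℝ)
    (V : ℝ → Matrix (Fin m₂) (Fin r) ℝ)
    (t0 t1 : ℝ) (ht : t0 ≤ t1)
    (hrank : ∀ t ∈ Set.Icc t0 t1, (A t).rank = r)
    (hfact : ∀ t ∈ Set.Icc t0 t1, A t = X t * S t * (V t)ᵀ)
    (hXorth : ∀ t ∈ Set.Icc t0 t1, (X t)ᵀ * X t = 1)
    (hVorth : ∀ t ∈ Set.Icc t0 t1, (V t)ᵀ * V t = 1)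
    (hinv : IsUnit ((V t1)ᵀ * V t0))
    (K : ℝ → Matrix (Fin m₁) (Fin r) ℝ)
    (hK : ∀ t ∈ Set.Icc t0 t1, K t = A t * V t0)
    (hK0 : K t0 = X t0 * S t0) :
    LinearMap.range (K t1).mulVecLin = LinearMap.range (A t1).mulVecLin :=
  k_step_range_general A X S V t0 t1 ht hfact hVorth hinv K hK
end

section
/- Consider the penalized implicit Euler step for the scalar linear relaxation g^{n+1} = g^n·(ε + D Δt)/(ε + λ Δt), where g = f − M measures deviation from equilibrium, and D, λ > 0 are constants with |D| ≤ αλ for some α < 1 and Δt ≥ ε/(λ(1−α))·|D − αλ|⁺. Then |g^{n+1}| ≤ max(α, 1) |g^n|, and as ε → 0 (with Δt fixed), |g^{n+1}| ≤ (|D|/λ)|g^n| ≤ α |g^n|. -/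
open Filter Topology

/-! In the stiff limit the amplification factor `(ε + DΔt)/(ε + λΔt)` of the IMEX step tends
to `D/λ`, and `|D| ≤ αλ` makes this at most `α`. For `ε > 0` the factor lies in `[0, 1]`
because `0 < D ≤ λ`, so one step never amplifies the deviation from equilibrium. -/

theorem abs_add_div_add_le_one {ε a b : ℝ} (hε : 0 ≤ ε) (ha : 0 ≤ a) (hab : a ≤ b) :
    |(ε + a) / (ε + b)| ≤ 1 := by
  have hnum : 0 ≤ ε + a := add_nonneg hε ha
  rw [abs_of_nonneg (div_nonneg hnum (hnum.trans (by linarith)))]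
  exact div_le_one_of_le₀ (by linarith) (by linarith)

theorem tendsto_add_div_add_nhds_zero {a b : ℝ} (hb : b ≠ 0) :
    Tendsto (fun ε : ℝ => (ε + a) / (ε + b)) (𝓝 0) (𝓝 (a / b)) := by
  have hid : Tendsto (fun ε : ℝ => ε) (𝓝 0) (𝓝 0) := tendsto_id
  have h := (hid.add_const a).div (hid.add_const b) (by rwa [zero_add])
  rwa [zero_add, zero_add] at h

/-- Stability of the penalized implicit Euler step for scalar linear relaxation:
`g^{n+1} = g^n (ε + DΔt)/(ε + λΔt)` satisfies `|g^{n+1}| ≤ max(α,1)|g^n|`, and in the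
stiff limit `ε → 0` the amplification factor tends to `D/λ`, giving
`|g^{n+1}| ≤ (|D|/λ)|g^n| ≤ α|g^n|`. -/
theorem penalized_relaxation_stability (g D lam α Δt : ℝ)
    (hD : 0 < D) (hlam : 0 < lam) (hα : |D| ≤ α * lam) (hα1 : α < 1) (hΔt : 0 < Δt)
    (gnew : ℝ → ℝ)
    (hg : ∀ ε > (0 : ℝ), gnew ε = g * ((ε + D * Δt) / (ε + lam * Δt))) :
    (∀ ε > (0 : ℝ), Δt ≥ ε / (lam * (1 - α)) * max (D - α * lam) 0 →
        |gnew ε| ≤ max α 1 * |g|) ∧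
    Tendsto gnew (nhdsWithin 0 (Set.Ioi 0)) (nhds (g * (D / lam))) ∧
    |g * (D / lam)| ≤ |D| / lam * |g| ∧ |D| / lam * |g| ≤ α * |g| := by
  have hDlam : D ≤ lam := by
    nlinarith [abs_of_pos hD ▸ hα]
  refine ⟨fun ε hε _ => ?_, ?_, ?_, ?_⟩
  · have hfactor := abs_add_div_add_le_one hε.le (mul_nonneg hD.le hΔt.le)
      (mul_le_mul_of_nonneg_right hDlam hΔt.le)
    calc |gnew ε| ≤ 1 * |g| := by
          rw [hg ε hε, abs_mul, mul_comm]
          exact mul_le_mul_of_nonneg_right hfactor (abs_nonneg g)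
      _ ≤ max α 1 * |g| := mul_le_mul_of_nonneg_right (le_max_right α 1) (abs_nonneg g)
  · have hlim := (tendsto_add_div_add_nhds_zero (a := D * Δt) (mul_pos hlam hΔt).ne').const_mul g
    rw [mul_div_mul_right D lam hΔt.ne'] at hlim
    exact (hlim.mono_left nhdsWithin_le_nhds).congr'
      (eventually_nhdsWithin_of_forall fun ε hε => (hg ε hε).symm)
  · rw [abs_mul, abs_div, abs_of_pos hlam, mul_comm]
  · exact mul_le_mul_of_nonneg_right ((div_le_iff₀ hlam).mpr hα) (abs_nonneg g)
end
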